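/- Let q be a nonzero complex number that is not a root of unity, and let S be the set of pairs (α, β) of nonzero complex numbers such that α^u β^v = q² for some integers u, v, and α^m β^n ≠ 1 for all pairs of integers (m, n) ≠ (0, 0). Then the set of orbits of the SL(2, ℤ)-action on S is uncountable; equivalently, there is no countable subset of S meeting every SL(2, ℤ)-orbit contained in S. -/

import Mathlib

/-! Every orbit meets `ℂ × {β}` only for `β` in the countable set `{t₁ᵃ t₂ᵇ}` of monomials in a
point `t` of the orbit, so a countable family of orbits has countably many second coordinates.
On the other hand `(q², β)` lies in `S` for all but countably many `β`: since `q²` is not a root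
of unity, a relation `q^(2m) βⁿ = 1` forces `n ≠ 0`, and each equation `βⁿ = q^(-2m)` has
finitely many solutions. -/

open Set

section Field

variable {K : Type*} [Field K]

theorem finite_setOf_pow_eq {n : ℕ} (hn : n ≠ 0) (c : K) : {x : K | x ^ n = c}.Finite :=
  (Polynomial.nthRoots n c).finite_toSet.subset fun _ hx =>
    (Polynomial.mem_nthRoots (Nat.pos_of_ne_zero hn)).2 hx

theorem finite_setOf_zpow_eq {n : ℤ} (hn : n ≠ 0) (c : K) : {x : K | x ^ n = c}.Finite := by
  obtain ⟨k, rfl | rfl⟩ := Int.eq_nat_or_neg n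
  · simpa using finite_setOf_pow_eq (by simpa using hn) c
  · simpa [inv_eq_iff_eq_inv] using finite_setOf_pow_eq (by simpa using hn) c⁻¹

theorem countable_setOf_mulDependent {α : K} (hα : ∀ m : ℤ, m ≠ 0 → α ^ m ≠ 1) :
    {β : K | ∃ m n : ℤ, (m, n) ≠ (0, 0) ∧ α ^ m * β ^ n = 1}.Countable := by
  refine (countable_iUnion fun m : ℤ => countable_iUnion fun n : ℤ => countable_iUnion
    fun hn : n ≠ 0 => (finite_setOf_zpow_eq hn (α ^ m)⁻¹).countable).mono ?_
  rintro β ⟨m, n, hmn, hrel⟩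
  have hn : n ≠ 0 := by
    rintro rfl
    exact hα m (by simpa using hmn) (by simpa using hrel)
  simp only [mem_iUnion, mem_ofPred_eq]
  exact ⟨m, n, hn, eq_inv_of_mul_eq_one_right hrel⟩

end Field

theorem countable_biUnion_range_zpow_mul_zpow {M : Type*} [DivInvMonoid M] {T : Set (M × M)}
    (hT : T.Countable) : (⋃ t ∈ T, range fun e : ℤ × ℤ => t.1 ^ e.1 * t.2 ^ e.2).Countable :=
  hT.biUnion fun _ _ => countable_range _

theorem sq_zpow_ne_one {G : Type*} [DivisionMonoid G] {q : G}
    (hqn : ∀ n : ℤ, n ≠ 0 → q ^ n ≠ 1) (m : ℤ) (hm : m ≠ 0) : (q ^ 2) ^ m ≠ 1 := by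
  rw [← zpow_natCast, ← zpow_mul]
  exact hqn _ (by simpa using hm)

/-- For `q` nonzero and not a root of unity, the family of
`SL(2, ℤ)`-orbits contained in the set `S` of pairs `(α, β)` of nonzero complex
numbers with `α^u β^v = q²` for some integers `u, v` and `α^m β^n ≠ 1` for all
`(m, n) ≠ (0, 0)` is uncountable: there is no countable subset of `S` meeting
every orbit contained in `S`. -/
theorem generic_orbits_uncountable (q : ℂ) (hq : q ≠ 0)
    (hqn : ∀ n : ℤ, n ≠ 0 → q ^ n ≠ 1) :
    ¬∃ T : Set (ℂ × ℂ),
      T ⊆ {p : ℂ × ℂ | p.1 ≠ 0 ∧ p.2 ≠ 0 ∧ (∃ u v : ℤ, p.1 ^ u * p.2 ^ v = q ^ 2) ∧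
          ∀ m n : ℤ, (m, n) ≠ (0, 0) → p.1 ^ m * p.2 ^ n ≠ 1} ∧
      T.Countable ∧
      ∀ p ∈ {p : ℂ × ℂ | p.1 ≠ 0 ∧ p.2 ≠ 0 ∧ (∃ u v : ℤ, p.1 ^ u * p.2 ^ v = q ^ 2) ∧
          ∀ m n : ℤ, (m, n) ≠ (0, 0) → p.1 ^ m * p.2 ^ n ≠ 1},
        ∃ t ∈ T, ∃ σ : Matrix.SpecialLinearGroup (Fin 2) ℤ,
          ((t.1 ^ ((σ : Matrix (Fin 2) (Fin 2) ℤ) 0 0) *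
              t.2 ^ ((σ : Matrix (Fin 2) (Fin 2) ℤ) 0 1),
            t.1 ^ ((σ : Matrix (Fin 2) (Fin 2) ℤ) 1 0) *
              t.2 ^ ((σ : Matrix (Fin 2) (Fin 2) ℤ) 1 1)) : ℂ × ℂ) = p := by
  rintro ⟨T, -, hTc, hTorb⟩
  have hbad := ((countable_singleton 0).union
    (countable_setOf_mulDependent (sq_zpow_ne_one hqn))).union (countable_biUnion_range_zpow_mul_zpow hTc)
  obtain ⟨β, hβ⟩ := (ne_univ_iff_exists_notMem _).1 fun h => not_countable_complex (h ▸ hbad)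
  simp only [mem_union, mem_singleton_iff, mem_ofPred_eq, not_or, not_exists, not_and] at hβ
  obtain ⟨⟨hβ0, hβindep⟩, hβorb⟩ := hβ
  obtain ⟨t, htT, σ, hσ⟩ := hTorb (q ^ 2, β)
    ⟨pow_ne_zero 2 hq, hβ0, ⟨1, 0, by simp⟩, fun m n hmn => hβindep m n hmn⟩
  exact hβorb (mem_biUnion htT ⟨(_, _), congrArg Prod.snd hσ⟩)
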